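/- arXiv:0906.1189 — 2 statements merged into one kernel-verified Lean document; each statement's English description precedes it below -/
import Mathlib

section
/- Let N ≥ 1, let s_1,…,s_N be positive reals, and let u_1 ≤ … ≤ u_N be nonnegative reals. Fix c > 0 and for σ > 0 with c·√σ < 1 set τ(σ) = c·√σ. Then the per-node CSMA throughput S(σ, τ(σ)) = p_s/(t̄_s + t̄_c + t̄_i) tends to 1/(s_1 + … + s_N) as σ → 0⁺. -/
open Finset Filter Topology

/-!
Dividing numerator and denominator by `p_s = τ (1 - τ)^(N-1)` turns `S` into the reciprocal of
`∑ (s_k + σ) + ∑_k ∑_l C(k-1, l) (τ / (1 - τ))^l (u_k + σ) + (1 - τ) σ / τ`.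
Along `τ = c √σ` both `τ` and `σ / τ = √σ / c` tend to `0`, so only `∑ s_k` survives.
-/

noncomputable def csmaThroughput (N : ℕ) (s u : ℕ → ℝ) (σ τ : ℝ) : ℝ :=
  (τ * (1 - τ) ^ (N - 1)) /
    ((∑ k ∈ Icc 1 N, (τ * (1 - τ) ^ (N - 1)) * (s k + σ)) +
     (∑ k ∈ Icc 2 N, τ * (1 - τ) ^ (N - k) *
        ∑ l ∈ Icc 1 (k - 1), ((k - 1).choose l : ℝ) * τ ^ l * (1 - τ) ^ (k - 1 - l) * (u k + σ)) +
     (1 - τ) ^ N * σ)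

/-- The mean slot time `t̄_s + t̄_c + t̄_i` divided by the success probability `p_s`. -/
noncomputable def normalizedCycleTime (N : ℕ) (s u : ℕ → ℝ) (σ τ : ℝ) : ℝ :=
  (∑ k ∈ Icc 1 N, (s k + σ)) +
  (∑ k ∈ Icc 2 N, ∑ l ∈ Icc 1 (k - 1), ((k - 1).choose l : ℝ) * (τ / (1 - τ)) ^ l * (u k + σ)) +
  (1 - τ) * (σ / τ)

section

variable {N : ℕ} {τ : ℝ}

lemma collision_summand_eq (hτ : τ ≠ 1) {k l : ℕ} (hk : k ∈ Icc 1 N) (hlk : l ≤ k - 1) (a b : ℝ) :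
    τ * (1 - τ) ^ (N - k) * (a * τ ^ l * (1 - τ) ^ (k - 1 - l) * b) =
      τ * (1 - τ) ^ (N - 1) * (a * (τ / (1 - τ)) ^ l * b) := by
  obtain ⟨hk1, hkN⟩ := mem_Icc.mp hk
  have hsplit : (1 - τ) ^ (N - 1) = (1 - τ) ^ (N - k) * (1 - τ) ^ (k - 1 - l) * (1 - τ) ^ l := by
    rw [← pow_add, ← pow_add]
    congr 1
    omega
  have : (1 - τ) ^ l ≠ 0 := pow_ne_zero _ (sub_ne_zero.mpr hτ.symm)
  rw [hsplit, div_pow]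
  field_simp

lemma idle_time_eq (hN : 1 ≤ N) (hτ : τ ≠ 0) (σ : ℝ) :
    (1 - τ) ^ N * σ = τ * (1 - τ) ^ (N - 1) * ((1 - τ) * (σ / τ)) := by
  obtain ⟨n, rfl⟩ := Nat.exists_eq_add_of_le' hN
  field_simp
  simp only [Nat.add_sub_cancel]
  ring

lemma cycleTime_eq_mul_normalizedCycleTime (hN : 1 ≤ N) (hτ0 : τ ≠ 0) (hτ1 : τ ≠ 1)
    (s u : ℕ → ℝ) (σ : ℝ) :
    (∑ k ∈ Icc 1 N, (τ * (1 - τ) ^ (N - 1)) * (s k + σ)) +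
     (∑ k ∈ Icc 2 N, τ * (1 - τ) ^ (N - k) *
        ∑ l ∈ Icc 1 (k - 1), ((k - 1).choose l : ℝ) * τ ^ l * (1 - τ) ^ (k - 1 - l) * (u k + σ)) +
     (1 - τ) ^ N * σ =
      τ * (1 - τ) ^ (N - 1) * normalizedCycleTime N s u σ τ := by
  rw [normalizedCycleTime, mul_add, mul_add, idle_time_eq hN hτ0, mul_sum, mul_sum]
  congr 2
  refine sum_congr rfl fun k hk => ?_
  rw [mul_sum, mul_sum]
  refine sum_congr rfl fun l hl => ?_
  exact collision_summand_eq hτ1 (Icc_subset_Icc_left one_le_two hk) (mem_Icc.mp hl).2 _ _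

lemma csmaThroughput_eq_inv (hN : 1 ≤ N) (hτ0 : 0 < τ) (hτ1 : τ < 1) (s u : ℕ → ℝ) (σ : ℝ) :
    csmaThroughput N s u σ τ = (normalizedCycleTime N s u σ τ)⁻¹ := by
  rw [csmaThroughput, cycleTime_eq_mul_normalizedCycleTime hN hτ0.ne' hτ1.ne]
  exact div_mul_cancel_left₀ (by positivity) _

end

lemma tendsto_normalizedCycleTime {α : Type*} {l : Filter α} {σ τ : α → ℝ} (N : ℕ) (s u : ℕ → ℝ)
    (hσ : Tendsto σ l (𝓝 0)) (hτ : Tendsto τ l (𝓝 0))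
    (hστ : Tendsto (fun a => σ a / τ a) l (𝓝 0)) :
    Tendsto (fun a => normalizedCycleTime N s u (σ a) (τ a)) l (𝓝 (∑ k ∈ Icc 1 N, s k)) := by
  have hodds : Tendsto (fun a => τ a / (1 - τ a)) l (𝓝 0) := by
    have := hτ.div (tendsto_const_nhds (x := (1 : ℝ)) |>.sub hτ) (by norm_num)
    rwa [sub_zero, zero_div] at this
  have hcollision (k : ℕ) : ∀ i ∈ Icc 1 (k - 1), Tendsto
      (fun a => ((k - 1).choose i : ℝ) * (τ a / (1 - τ a)) ^ i * (u k + σ a)) l (𝓝 0) := by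
    intro i hi
    have hi0 : i ≠ 0 := by have := (mem_Icc.mp hi).1; omega
    simpa [zero_pow hi0] using ((hodds.pow i).const_mul _).mul (tendsto_const_nhds.add hσ)
  have hlim : Tendsto (fun a => normalizedCycleTime N s u (σ a) (τ a)) l
      (𝓝 (∑ k ∈ Icc 1 N, (s k + 0) + ∑ k ∈ Icc 2 N, ∑ i ∈ Icc 1 (k - 1), 0 + (1 - 0) * 0)) :=
    ((tendsto_finsetSum _ fun k _ => tendsto_const_nhds.add hσ).add
      (tendsto_finsetSum _ fun k _ => tendsto_finsetSum _ (hcollision k))).add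
      ((tendsto_const_nhds.sub hτ).mul hστ)
  simpa using hlim

lemma div_mul_sqrt_eq_sqrt_div (c σ : ℝ) : σ / (c * √σ) = √σ / c := by
  rw [mul_comm, ← div_div, Real.div_sqrt]

theorem csma_throughput_limit_sqrt_general
    (N : ℕ) (hN : 1 ≤ N) (s u : ℕ → ℝ)
    (hs : ∀ k ∈ Finset.Icc 1 N, 0 < s k)
    (c : ℝ) (hc : 0 < c) :
    Tendsto
      (fun σ : ℝ =>
        (fun τ : ℝ =>
          (τ * (1 - τ) ^ (N - 1)) /
            ((∑ k ∈ Finset.Icc 1 N, (τ * (1 - τ) ^ (N - 1)) * (s k + σ)) +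
             (∑ k ∈ Finset.Icc 2 N, τ * (1 - τ) ^ (N - k) *
                ∑ l ∈ Finset.Icc 1 (k - 1),
                  ((k - 1).choose l : ℝ) * τ ^ l * (1 - τ) ^ (k - 1 - l) * (u k + σ)) +
             (1 - τ) ^ N * σ)) (c * Real.sqrt σ))
      (𝓝[>] (0 : ℝ)) (𝓝 (1 / ∑ k ∈ Finset.Icc 1 N, s k)) := by
  have hsum : 0 < ∑ k ∈ Icc 1 N, s k := sum_pos hs ⟨1, by simp [hN]⟩
  have hσ : Tendsto (fun σ : ℝ => σ) (𝓝[>] 0) (𝓝 0) := tendsto_nhdsWithin_of_tendsto_nhds tendsto_id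
  have hτ : Tendsto (fun σ => c * √σ) (𝓝[>] 0) (𝓝 0) := by
    simpa using (Real.continuous_sqrt.tendsto 0).const_mul c |>.mono_left nhdsWithin_le_nhds
  have hστ : Tendsto (fun σ => σ / (c * √σ)) (𝓝[>] 0) (𝓝 0) := by
    simpa [div_mul_sqrt_eq_sqrt_div] using
      (Real.continuous_sqrt.tendsto 0).div_const c |>.mono_left nhdsWithin_le_nhds
  rw [one_div]
  refine ((tendsto_normalizedCycleTime N s u hσ hτ hστ).inv₀ hsum.ne').congr' ?_
  filter_upwards [self_mem_nhdsWithin, hτ.eventually (Iio_mem_nhds one_pos)] with σ hσ0 hτ1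
  exact (csmaThroughput_eq_inv hN (mul_pos hc (Real.sqrt_pos.2 hσ0)) hτ1 s u σ).symm

/-- For `N ≥ 1`, positive travel times `s_1,…,s_N`, nondecreasing nonnegative
packet durations `u_1 ≤ … ≤ u_N`, and `τ(σ) = c·√σ` with `c > 0`, the per-node CSMA
throughput `S(σ, τ(σ)) = p_s/(t̄_s + t̄_c + t̄_i)` tends to `1/(s_1 + … + s_N)` as `σ → 0⁺`. -/
theorem csma_throughput_limit_sqrt
    (N : ℕ) (hN : 1 ≤ N) (s u : ℕ → ℝ)
    (hs : ∀ k ∈ Finset.Icc 1 N, 0 < s k)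
    (hu0 : ∀ k ∈ Finset.Icc 1 N, 0 ≤ u k)
    (humono : ∀ k l, 1 ≤ k → k ≤ l → l ≤ N → u k ≤ u l)
    (c : ℝ) (hc : 0 < c) :
    Tendsto
      (fun σ : ℝ =>
        (fun τ : ℝ =>
          (τ * (1 - τ) ^ (N - 1)) /
            ((∑ k ∈ Finset.Icc 1 N, (τ * (1 - τ) ^ (N - 1)) * (s k + σ)) +
             (∑ k ∈ Finset.Icc 2 N, τ * (1 - τ) ^ (N - k) *
                ∑ l ∈ Finset.Icc 1 (k - 1),
                  ((k - 1).choose l : ℝ) * τ ^ l * (1 - τ) ^ (k - 1 - l) * (u k + σ)) +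
             (1 - τ) ^ N * σ)) (c * Real.sqrt σ))
      (𝓝[>] (0 : ℝ)) (𝓝 (1 / ∑ k ∈ Finset.Icc 1 N, s k)) :=
  csma_throughput_limit_sqrt_general N hN s u hs c hc
end

section
/- Let N ≥ 1, let s_1,…,s_N be positive reals, and let u_1 ≤ … ≤ u_N be nonnegative reals. Let τ : (0,∞) → (0,1) be any function such that τ(σ) → 0 and σ/τ(σ) → 0 as σ → 0⁺. Then the per-node CSMA throughput S(σ, τ(σ)) = p_s/(t̄_s + t̄_c + t̄_i) tends to 1/(s_1 + … + s_N) as σ → 0⁺. -/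
/-!
Dividing numerator and denominator by the success probability `p_s = τ (1 - τ)^(N-1)` turns the
throughput into the reciprocal of
`∑ₖ (s_k + σ) + ∑ₖ (∑_{l ≥ 1} C(k-1, l) τ^l (1 - τ)^(k-1-l) (u_k + σ)) / (1 - τ)^(k-1)`
`+ (1 - τ) σ / τ`.
Every collision summand carries a factor `τ^l` with `l ≥ 1`, so the middle sum vanishes as
`τ → 0`, and the idle term vanishes because `σ / τ → 0`; what is left tends to `∑ₖ s_k`.
-/

open Finset Filter Topology

lemma mul_pow_sub_mul_div_mul_pow {K : Type*} [Field K] {a b : K} (x : K) (ha : a ≠ 0)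
    (hb : b ≠ 0) {j n : ℕ} (hjn : j ≤ n) : a * b ^ (n - j) * x / (a * b ^ n) = x / b ^ j := by
  rw [pow_sub₀ b hb hjn]
  field_simp

lemma tendsto_binomial_tail_div {α 𝕜 : Type*} [NormedField 𝕜] {l : Filter α} {f g : α → 𝕜}
    {b : 𝕜} (hf : Tendsto f l (𝓝 0)) (hg : Tendsto g l (𝓝 b)) (n : ℕ) :
    Tendsto (fun x => (∑ i ∈ Icc 1 n,
        (n.choose i : 𝕜) * f x ^ i * (1 - f x) ^ (n - i) * g x) / (1 - f x) ^ n) l (𝓝 0) := by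
  have h1f : Tendsto (fun x => 1 - f x) l (𝓝 1) := by
    simpa using tendsto_const_nhds.sub hf
  have hnum : Tendsto (fun x => ∑ i ∈ Icc 1 n,
      (n.choose i : 𝕜) * f x ^ i * (1 - f x) ^ (n - i) * g x) l (𝓝 0) := by
    rw [← sum_const_zero (s := Icc 1 n)]
    refine tendsto_finsetSum _ fun i hi => ?_
    have hi0 : i ≠ 0 := by have := (mem_Icc.mp hi).1; omega
    simpa [zero_pow hi0] using
      ((tendsto_const_nhds.mul (hf.pow i)).mul (h1f.pow (n - i))).mul hg
  have h := hnum.div (h1f.pow n) (by simp)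
  rwa [zero_div] at h

lemma csma_denominator_div_success_prob (N : ℕ) (hN : 1 ≤ N) (s u : ℕ → ℝ) {t : ℝ} (σ : ℝ)
    (ht : t ≠ 0) (ht1 : 1 - t ≠ 0) :
    ((∑ k ∈ Icc 1 N, (t * (1 - t) ^ (N - 1)) * (s k + σ)) +
        (∑ k ∈ Icc 2 N, t * (1 - t) ^ (N - k) *
          ∑ l ∈ Icc 1 (k - 1),
            ((k - 1).choose l : ℝ) * t ^ l * (1 - t) ^ (k - 1 - l) * (u k + σ)) +
        (1 - t) ^ N * σ) / (t * (1 - t) ^ (N - 1)) =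
      (∑ k ∈ Icc 1 N, (s k + σ)) +
        (∑ k ∈ Icc 2 N, (∑ l ∈ Icc 1 (k - 1),
            ((k - 1).choose l : ℝ) * t ^ l * (1 - t) ^ (k - 1 - l) * (u k + σ)) /
          (1 - t) ^ (k - 1)) +
        (1 - t) * (σ / t) := by
  have hp : t * (1 - t) ^ (N - 1) ≠ 0 := mul_ne_zero ht (pow_ne_zero _ ht1)
  rw [add_div, add_div]
  congr 1
  · congr 1
    · rw [sum_div]
      exact sum_congr rfl fun k _ => mul_div_cancel_left₀ _ hp
    · rw [sum_div]
      refine sum_congr rfl fun k hk => ?_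
      have hk := mem_Icc.mp hk
      have hNk : N - k = N - 1 - (k - 1) := by omega
      rw [hNk, mul_pow_sub_mul_div_mul_pow _ ht ht1 (by omega)]
  · obtain ⟨M, rfl⟩ := Nat.exists_eq_add_of_le' hN
    simp only [Nat.add_sub_cancel, pow_succ]
    field_simp

theorem csma_throughput_limit_general_general
    (N : ℕ) (hN : 1 ≤ N) (s u : ℕ → ℝ)
    (hs : ∀ k ∈ Finset.Icc 1 N, 0 < s k)
    (τ : ℝ → ℝ)
    (hτmem : ∀ σ : ℝ, 0 < σ → τ σ ∈ Set.Ioo (0 : ℝ) 1)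
    (hτ0 : Tendsto τ (𝓝[>] (0 : ℝ)) (𝓝 0))
    (hστ : Tendsto (fun σ : ℝ => σ / τ σ) (𝓝[>] (0 : ℝ)) (𝓝 0)) :
    Tendsto
      (fun σ : ℝ =>
        (τ σ * (1 - τ σ) ^ (N - 1)) /
          ((∑ k ∈ Finset.Icc 1 N, (τ σ * (1 - τ σ) ^ (N - 1)) * (s k + σ)) +
           (∑ k ∈ Finset.Icc 2 N, τ σ * (1 - τ σ) ^ (N - k) *
              ∑ l ∈ Finset.Icc 1 (k - 1),
                ((k - 1).choose l : ℝ) * (τ σ) ^ l * (1 - τ σ) ^ (k - 1 - l) * (u k + σ)) +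
           (1 - τ σ) ^ N * σ))
      (𝓝[>] (0 : ℝ)) (𝓝 (1 / ∑ k ∈ Finset.Icc 1 N, s k)) := by
  have hS : 0 < ∑ k ∈ Icc 1 N, s k := sum_pos hs ⟨1, by simp [hN]⟩
  have hσ : Tendsto (fun σ : ℝ => σ) (𝓝[>] 0) (𝓝 0) := tendsto_nhdsWithin_of_tendsto_nhds tendsto_id
  have h1τ : Tendsto (fun σ => 1 - τ σ) (𝓝[>] 0) (𝓝 1) := by
    simpa using tendsto_const_nhds.sub hτ0
  have htravel := tendsto_finsetSum (Icc 1 N) fun k _ => (tendsto_const_nhds (x := s k)).add hσ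
  have hcollision := tendsto_finsetSum (Icc 2 N) fun k _ =>
    tendsto_binomial_tail_div hτ0 ((tendsto_const_nhds (x := u k)).add hσ) (k - 1)
  have hidle := h1τ.mul hστ
  simp only [add_zero, sum_const_zero, mul_zero] at htravel hcollision hidle
  have hlim := (htravel.add hcollision).add hidle
  rw [add_zero, add_zero] at hlim
  rw [one_div]
  refine (hlim.inv₀ hS.ne').congr' ?_
  filter_upwards [self_mem_nhdsWithin] with σ hσpos
  obtain ⟨ht, ht1⟩ := hτmem σ hσpos
  rw [← csma_denominator_div_success_prob N hN s u σ ht.ne' (sub_ne_zero.mpr ht1.ne'), inv_div]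

/-- For `N ≥ 1`, positive travel times `s_k`, nondecreasing nonnegative packet
durations `u_k`, and any `τ : (0,∞) → (0,1)` with `τ(σ) → 0` and `σ/τ(σ) → 0` as `σ → 0⁺`,
the per-node CSMA throughput `S(σ, τ(σ))` tends to `1/(s_1 + … + s_N)` as `σ → 0⁺`. -/
theorem csma_throughput_limit_general
    (N : ℕ) (hN : 1 ≤ N) (s u : ℕ → ℝ)
    (hs : ∀ k ∈ Finset.Icc 1 N, 0 < s k)
    (hu0 : ∀ k ∈ Finset.Icc 1 N, 0 ≤ u k)
    (humono : ∀ k l, 1 ≤ k → k ≤ l → l ≤ N → u k ≤ u l)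
    (τ : ℝ → ℝ)
    (hτmem : ∀ σ : ℝ, 0 < σ → τ σ ∈ Set.Ioo (0 : ℝ) 1)
    (hτ0 : Tendsto τ (𝓝[>] (0 : ℝ)) (𝓝 0))
    (hστ : Tendsto (fun σ : ℝ => σ / τ σ) (𝓝[>] (0 : ℝ)) (𝓝 0)) :
    Tendsto
      (fun σ : ℝ =>
        (τ σ * (1 - τ σ) ^ (N - 1)) /
          ((∑ k ∈ Finset.Icc 1 N, (τ σ * (1 - τ σ) ^ (N - 1)) * (s k + σ)) +
           (∑ k ∈ Finset.Icc 2 N, τ σ * (1 - τ σ) ^ (N - k) *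
              ∑ l ∈ Finset.Icc 1 (k - 1),
                ((k - 1).choose l : ℝ) * (τ σ) ^ l * (1 - τ σ) ^ (k - 1 - l) * (u k + σ)) +
           (1 - τ σ) ^ N * σ))
      (𝓝[>] (0 : ℝ)) (𝓝 (1 / ∑ k ∈ Finset.Icc 1 N, s k)) :=
  csma_throughput_limit_general_general N hN s u hs τ hτmem hτ0 hστ
end
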